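/- The operator X shifts the parameter α of U_n by one: for every integer n with 0 ≤ n ≤ N and every integer x, (x − α) U_n(x;α,β,N) − x U_n(x−1;α,β,N) = −α · U_n(x;α+1,β,N). -/

import Mathlib

/-- Pochhammer symbol `(a)_k = a (a+1) ⋯ (a+k-1)`, with `(a)_0 = 1`. -/
noncomputable def poch (a : ℝ) (k : ℕ) : ℝ := ∏ i ∈ Finset.range k, (a + (i : ℝ))

/-- The rational function of Hahn type `U_n(x;α,β,N)`. -/
noncomputable def U (α β : ℝ) (N n : ℕ) (x : ℤ) : ℝ :=
  ((-1 : ℝ) ^ n * poch (-(N : ℝ)) n / poch (β + 1) n) *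
    ∑ k ∈ Finset.range (n + 1),
      poch (-(x : ℝ)) k * poch (-(n : ℝ)) k * poch (β + (n : ℝ) - (N : ℝ)) k /
        ((Nat.factorial k : ℝ) * poch (-(N : ℝ)) k * poch (α - (x : ℝ)) k)

/-!
Since `(-x)_k (-x + k) = -x (1 - x)_k` and `(α - x)_k (α - x + k) = (α - x) (α - x + 1)_k`,
the ratios `(-x)_k / (α - x)_k` satisfy a three-term contiguous relation in `(x, α)`; the identity
follows by applying it to each term of the hypergeometric sum defining `U_n`, the other factors
of the `k`-th term being independent of `x` and `α`.
-/

lemma poch_succ (a : ℝ) (k : ℕ) : poch a (k + 1) = poch a k * (a + k) := by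
  simp [poch, Finset.prod_range_succ]

lemma poch_succ' (a : ℝ) (k : ℕ) : poch a (k + 1) = a * poch (a + 1) k := by
  simp only [poch]
  rw [Finset.prod_range_succ', mul_comm]
  simp [add_assoc, add_comm (1 : ℝ)]

lemma poch_div_add_poch_div (a c : ℝ) (k : ℕ) (hc : poch c (k + 1) ≠ 0) :
    -c * (poch a k / poch c k) + a * (poch (a + 1) k / poch (c + 1) k)
      = (a - c) * (poch a k / poch (c + 1) k) := by
  have hck : poch c k ≠ 0 := left_ne_zero_of_mul (poch_succ c k ▸ hc)
  have hc1k : poch (c + 1) k ≠ 0 := right_ne_zero_of_mul (poch_succ' c k ▸ hc)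
  have ha_succ : poch a k * (a + k) = a * poch (a + 1) k := by rw [← poch_succ, poch_succ']
  have hc_succ : poch c k * (c + k) = c * poch (c + 1) k := by rw [← poch_succ, poch_succ']
  field_simp
  linear_combination poch a k * hc_succ - poch c k * ha_succ

lemma poch_sub_intCast_ne_zero {α : ℝ} (hα : ∀ m : ℤ, α ≠ (m : ℝ)) (x : ℤ) (k : ℕ) :
    poch (α - x) k ≠ 0 :=
  Finset.prod_ne_zero_iff.mpr fun i _ h => hα (x - i) (by push_cast; linarith)

noncomputable def hahnTerm (α β : ℝ) (N n : ℕ) (x : ℤ) (k : ℕ) : ℝ :=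
  poch (-(x : ℝ)) k * poch (-(n : ℝ)) k * poch (β + (n : ℝ) - (N : ℝ)) k /
    ((Nat.factorial k : ℝ) * poch (-(N : ℝ)) k * poch (α - (x : ℝ)) k)

lemma U_eq_sum_hahnTerm (α β : ℝ) (N n : ℕ) (x : ℤ) :
    U α β N n x = ((-1 : ℝ) ^ n * poch (-(N : ℝ)) n / poch (β + 1) n) *
      ∑ k ∈ Finset.range (n + 1), hahnTerm α β N n x k :=
  rfl

lemma hahnTerm_contiguous {α : ℝ} (hα : ∀ m : ℤ, α ≠ (m : ℝ)) (β : ℝ) (N n : ℕ) (x : ℤ)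
    (k : ℕ) :
    ((x : ℝ) - α) * hahnTerm α β N n x k - (x : ℝ) * hahnTerm α β N n (x - 1) k
      = -α * hahnTerm (α + 1) β N n x k := by
  have hrel := poch_div_add_poch_div (-(x : ℝ)) (α - x) k (poch_sub_intCast_ne_zero hα x (k + 1))
  have hx : ((x - 1 : ℤ) : ℝ) = x - 1 := by push_cast; ring
  simp only [hahnTerm, hx]
  rw [show -((x : ℝ) - 1) = -x + 1 by ring, show α - ((x : ℝ) - 1) = α - x + 1 by ring,
    show α + 1 - (x : ℝ) = α - x + 1 by ring]
  linear_combination (poch (-(n : ℝ)) k * poch (β + n - N) k /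
    ((Nat.factorial k : ℝ) * poch (-(N : ℝ)) k)) * hrel

theorem statement6_general (N : ℕ) (α β : ℝ)
    (hα : ∀ m : ℤ, α ≠ (m : ℝ))
    (n : ℕ) (x : ℤ) :
    ((x : ℝ) - α) * U α β N n x - (x : ℝ) * U α β N n (x - 1)
      = -α * U (α + 1) β N n x := by
  simp only [U_eq_sum_hahnTerm, Finset.mul_sum, ← Finset.sum_sub_distrib]
  refine Finset.sum_congr rfl fun k _ => ?_
  linear_combination ((-1 : ℝ) ^ n * poch (-(N : ℝ)) n / poch (β + 1) n) *
    hahnTerm_contiguous hα β N n x k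

theorem statement6 (N : ℕ) (hN : 0 < N) (α β : ℝ)
    (hα : ∀ m : ℤ, α ≠ (m : ℝ)) (hβ : ∀ m : ℤ, β ≠ (m : ℝ))
    (n : ℕ) (hn : n ≤ N) (x : ℤ) :
    ((x : ℝ) - α) * U α β N n x - (x : ℝ) * U α β N n (x - 1)
      = -α * U (α + 1) β N n x :=
  statement6_general N α β hα n x
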